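/- arXiv:2510.00215 — 5 statements merged into one kernel-verified Lean document; each statement's English description precedes it below -/
import Mathlib

section
/- Let a, b, z be parameters and define T_n = (Γ(a+n)Γ(b+n)/Γ(2a+2n))·(1/z)^{a+n}·₂F₁(a+n, b+n; 2a+2n; 1/z). Then for all n ≥ 1, (2a−b+n)·T_{n+1} − (2z−1)(2a+2n−1)·T_n + (b+n−1)·T_{n−1} = 0. -/
open scoped BigOperators

open Filter Topology Finset

/-- Gauss hypergeometric series. -/
noncomputable def F21 (a b c z : ℝ) : ℝ :=
  ∑' n : ℕ, (ascPochhammer ℝ n).eval a * (ascPochhammer ℝ n).eval b /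
    ((ascPochhammer ℝ n).eval c * (n.factorial : ℝ)) * z ^ n


lemma gammaPoch (c : ℝ) (hc : 0 < c) (k : ℕ) :
    Real.Gamma (c + k) = Real.Gamma c * (ascPochhammer ℝ k).eval c := by
  induction k with
  | zero => simp
  | succ k ih =>
    have h1 : c + ((k : ℝ) + 1) = (c + k) + 1 := by ring
    push_cast
    rw [h1, Real.Gamma_add_one (by positivity), ascPochhammer_succ_eval]
    push_cast at ih
    rw [ih]; ring

lemma tendLin (p q : ℝ) : Tendsto (fun k : ℕ => (p + k) / (q + k)) atTop (𝓝 1) := by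
  have hq : Tendsto (fun k : ℕ => q + (k : ℝ)) atTop atTop :=
    tendsto_atTop_add_const_left _ q tendsto_natCast_atTop_atTop
  have h0 : Tendsto (fun k : ℕ => (p - q) / (q + (k : ℝ))) atTop (𝓝 0) :=
    Tendsto.div_atTop tendsto_const_nhds hq
  have h1 : Tendsto (fun k : ℕ => 1 + (p - q) / (q + (k : ℝ))) atTop (𝓝 1) := by
    simpa using h0.const_add 1
  refine h1.congr' ?_
  filter_upwards [hq.eventually_gt_atTop 0] with k hk
  field_simp
  ring

noncomputable def W (c d x : ℝ) (k : ℕ) : ℝ :=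
  Real.Gamma (c + k) * Real.Gamma (d + k) / (Real.Gamma (2 * c + k) * k.factorial) *
    x ^ (c + (k : ℝ))

lemma W_pos {c d x : ℝ} (hc : 0 < c) (hd : 0 < d) (hx : 0 < x) (k : ℕ) : 0 < W c d x k := by
  unfold W
  have h1 := Real.Gamma_pos_of_pos (show (0:ℝ) < c + k by positivity)
  have h2 := Real.Gamma_pos_of_pos (show (0:ℝ) < d + k by positivity)
  have h3 := Real.Gamma_pos_of_pos (show (0:ℝ) < 2 * c + k by positivity)
  have h4 : (0:ℝ) < k.factorial := by positivity
  have h5 : (0:ℝ) < x ^ (c + (k:ℝ)) := Real.rpow_pos_of_pos hx _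
  positivity

lemma W_succ {c d x : ℝ} (hc : 0 < c) (hd : 0 < d) (hx : 0 < x) (k : ℕ) :
    W c d x (k + 1) = (x * ((c + k) / (2 * c + k)) * ((d + k) / (1 + k))) * W c d x k := by
  unfold W
  have e1 : c + ((k : ℝ) + 1) = (c + k) + 1 := by ring
  have e2 : d + ((k : ℝ) + 1) = (d + k) + 1 := by ring
  have e3 : 2 * c + ((k : ℝ) + 1) = (2 * c + k) + 1 := by ring
  push_cast
  rw [e1, e2, e3, Real.Gamma_add_one (by positivity), Real.Gamma_add_one (by positivity),
    Real.Gamma_add_one (by positivity), Real.rpow_add_one (ne_of_gt hx), Nat.factorial_succ]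
  have h3 := (Real.Gamma_pos_of_pos (show (0:ℝ) < 2 * c + k by positivity)).ne'
  have h4 : ((k.factorial : ℝ)) ≠ 0 := by positivity
  have h5 : (2 * c + (k:ℝ)) ≠ 0 := by positivity
  have h6 : (1 + (k:ℝ)) ≠ 0 := by positivity
  push_cast
  field_simp
  ring

lemma W_summable {c d x : ℝ} (hc : 0 < c) (hd : 0 < d) (hx : 0 < x) (hx1 : x < 1) :
    Summable (W c d x) := by
  apply summable_of_ratio_test_tendsto_lt_one hx1
    (Eventually.of_forall fun k => (W_pos hc hd hx k).ne')
  have key : ∀ k : ℕ, ‖W c d x (k + 1)‖ / ‖W c d x k‖ =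
      x * ((c + k) / (2 * c + k)) * ((d + k) / (1 + k)) := by
    intro k
    rw [Real.norm_of_nonneg (W_pos hc hd hx _).le, Real.norm_of_nonneg (W_pos hc hd hx _).le,
      W_succ hc hd hx k, mul_div_assoc, div_self (W_pos hc hd hx k).ne', mul_one]
  simp only [key]
  have h1 : Tendsto (fun k : ℕ => (c + (k:ℝ)) / (2 * c + k)) atTop (𝓝 1) := tendLin c (2*c)
  have h2 : Tendsto (fun k : ℕ => (d + (k:ℝ)) / (1 + k)) atTop (𝓝 1) := tendLin d 1
  have h3 := (h1.const_mul x).mul h2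
  simpa using h3

lemma W_rep {c d x : ℝ} (hc : 0 < c) (hd : 0 < d) (hx : 0 < x) :
    Real.Gamma c * Real.Gamma d / Real.Gamma (2 * c) * x ^ (c : ℝ) * F21 c d (2 * c) x =
      ∑' k, W c d x k := by
  rw [F21, ← tsum_mul_left]
  apply tsum_congr
  intro k
  unfold W
  rw [gammaPoch c hc k, gammaPoch d hd k, gammaPoch (2*c) (by positivity) k,
    Real.rpow_add hx, Real.rpow_natCast]
  have h1 := (Real.Gamma_pos_of_pos (show (0:ℝ) < 2*c by positivity)).ne'
  have h2 := (ascPochhammer_pos k (2*c) (by positivity)).ne'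
  have h4 : ((k.factorial : ℝ)) ≠ 0 := by positivity
  field_simp

lemma W_hasSum {c d x : ℝ} (hc : 0 < c) (hd : 0 < d) (hx : 0 < x) (hx1 : x < 1) :
    HasSum (W c d x)
      (Real.Gamma c * Real.Gamma d / Real.Gamma (2 * c) * x ^ (c : ℝ) * F21 c d (2 * c) x) := by
  rw [W_rep hc hd hx]
  exact (W_summable hc hd hx hx1).hasSum

set_option maxHeartbeats 1000000 in
theorem stmt2 (a b z : ℝ) (ha : 0 < a) (hb : 0 < b) (hz : 1 < z) (T : ℕ → ℝ)
    (hT : ∀ n : ℕ, T n =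
      Real.Gamma (a + n) * Real.Gamma (b + n) / Real.Gamma (2 * a + 2 * n) *
        (1 / z) ^ (a + (n : ℝ)) * F21 (a + n) (b + n) (2 * a + 2 * n) (1 / z)) :
    ∀ n : ℕ, 1 ≤ n →
      (2 * a - b + n) * T (n + 1) - (2 * z - 1) * (2 * a + 2 * n - 1) * T n +
        (b + n - 1) * T (n - 1) = 0 := by
  intro n hn
  obtain ⟨p, rfl⟩ : ∃ p, n = p + 1 := ⟨n - 1, (Nat.succ_pred_eq_of_pos hn).symm⟩
  have hz0 : (0:ℝ) < z := by linarith
  have hx0 : (0:ℝ) < 1 / z := by positivity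
  have hx1 : (1:ℝ) / z < 1 := by rw [div_lt_one hz0]; exact hz
  set A : ℝ := a + (p : ℝ) with hA
  set B : ℝ := b + (p : ℝ) with hB
  have hA0 : 0 < A := by positivity
  have hB0 : 0 < B := by positivity
  -- the three HasSum representations
  have rep : ∀ m : ℕ, HasSum (W (a + m) (b + m) (1/z)) (T m) := by
    intro m
    have h := W_hasSum (show (0:ℝ) < a + m by positivity) (show (0:ℝ) < b + m by positivity)
      hx0 hx1
    have e : T m = Real.Gamma (a + m) * Real.Gamma (b + m) / Real.Gamma (2 * (a + m)) *
        (1/z) ^ (a + (m:ℝ)) * F21 (a + m) (b + m) (2 * (a + m)) (1/z) := by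
      rw [hT m]; ring_nf
    rw [e]; exact h
  have h1 : HasSum (W (A + 2) (B + 2) (1/z)) (T (p + 2)) := by
    have := rep (p + 2)
    have e1 : a + ((p:ℕ) + 2 : ℕ) = A + 2 := by push_cast [hA]; ring
    have e2 : b + ((p:ℕ) + 2 : ℕ) = B + 2 := by push_cast [hB]; ring
    rwa [e1, e2] at this
  have h2 : HasSum (W (A + 1) (B + 1) (1/z)) (T (p + 1)) := by
    have := rep (p + 1)
    have e1 : a + ((p:ℕ) + 1 : ℕ) = A + 1 := by push_cast [hA]; ring
    have e2 : b + ((p:ℕ) + 1 : ℕ) = B + 1 := by push_cast [hB]; ring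
    rwa [e1, e2] at this
  have h3 : HasSum (W A B (1/z)) (T p) := rep p
  -- shifted versions
  set f1 : ℕ → ℝ := fun m => if 2 ≤ m then W (A + 2) (B + 2) (1/z) (m - 2) else 0 with hf1
  set f2 : ℕ → ℝ := fun m => if 1 ≤ m then W (A + 1) (B + 1) (1/z) (m - 1) else 0 with hf2
  have hs1 : HasSum f1 (T (p + 2)) := by
    have e : (fun m => f1 (m + 2)) = W (A + 2) (B + 2) (1/z) := by
      funext m; simp [hf1]
    have := (hasSum_nat_add_iff (f := f1) 2).mp (by rw [e]; exact h1)
    simpa [hf1, Finset.sum_range_succ] using this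
  have hs2 : HasSum f2 (T (p + 1)) := by
    have e : (fun m => f2 (m + 1)) = W (A + 1) (B + 1) (1/z) := by
      funext m; simp [hf2]
    have := (hasSum_nat_add_iff (f := f2) 1).mp (by rw [e]; exact h2)
    simpa [hf2, Finset.sum_range_succ] using this
  have hs3 : HasSum (fun m => z * W (A + 1) (B + 1) (1/z) m) (z * T (p + 1)) := h2.mul_left z
  have key : HasSum
      (fun m => (2*A - B + 1) * f1 m - 2*(2*A + 1) * (z * W (A + 1) (B + 1) (1/z) m)
        + (2*A + 1) * f2 m + B * W A B (1/z) m)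
      ((2*A - B + 1) * T (p + 2) - 2*(2*A + 1) * (z * T (p + 1))
        + (2*A + 1) * T (p + 1) + B * T p) :=
    (((hs1.mul_left _).sub (hs3.mul_left _)).add (hs2.mul_left _)).add (h3.mul_left _)
  have hzero : ∀ m : ℕ, (2*A - B + 1) * f1 m - 2*(2*A + 1) * (z * W (A + 1) (B + 1) (1/z) m)
        + (2*A + 1) * f2 m + B * W A B (1/z) m = 0 := by
    have hzne : z ≠ 0 := hz0.ne'
    have hxne : (1:ℝ)/z ≠ 0 := hx0.ne'
    intro m
    rcases m with _ | _ | j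
    · simp only [hf1, hf2, W]
      norm_num
      have g2A := (Real.Gamma_pos_of_pos (show (0:ℝ) < 2*A by positivity)).ne'
      have hzi : (z:ℝ)⁻¹ ≠ 0 := inv_ne_zero hzne
      rw [Real.Gamma_add_one hA0.ne', Real.Gamma_add_one hB0.ne',
        show 2*(A+1) = (2*A+1)+1 by ring,
        Real.Gamma_add_one (show (2*A+1:ℝ) ≠ 0 by positivity),
        Real.Gamma_add_one (show (2*A:ℝ) ≠ 0 by positivity),
        Real.rpow_add_one hzi A]
      field_simp
      ring
    · simp only [hf1, hf2, W]
      norm_num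
      have g2A := (Real.Gamma_pos_of_pos (show (0:ℝ) < 2*A+1 by positivity)).ne'
      have hzi : (z:ℝ)⁻¹ ≠ 0 := inv_ne_zero hzne
      rw [show 2*(A+1)+1 = ((2*A+1)+1)+1 by ring,
        Real.Gamma_add_one (show ((2*A+1)+1:ℝ) ≠ 0 by positivity),
        show 2*(A+1) = (2*A+1)+1 by ring,
        Real.Gamma_add_one (show (2*A+1:ℝ) ≠ 0 by positivity),
        Real.Gamma_add_one (show (A+1:ℝ) ≠ 0 by positivity),
        Real.Gamma_add_one (show (B+1:ℝ) ≠ 0 by positivity),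
        Real.rpow_add_one hzi (A+1)]
      field_simp
      ring
    · simp only [hf1, hf2, W]
      norm_num [Nat.factorial_succ]
      push_cast
      have hzi : (z:ℝ)⁻¹ ≠ 0 := inv_ne_zero hzne
      have gG3 := (Real.Gamma_pos_of_pos (show (0:ℝ) < 2*A+(j:ℝ)+2 by positivity)).ne'
      have hfj : ((j.factorial : ℝ)) ≠ 0 := by positivity
      rw [show A + ((j:ℝ)+1+1) = A+(j:ℝ)+2 by ring,
        show B + ((j:ℝ)+1+1) = B+(j:ℝ)+2 by ring,
        show 2*(A+2)+((j:ℝ)+1+1-2) = (2*A+(j:ℝ)+2+1)+1 by ring,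
        show A+1+((j:ℝ)+1+1) = (A+(j:ℝ)+2)+1 by ring,
        show B+1+((j:ℝ)+1+1) = (B+(j:ℝ)+2)+1 by ring,
        show 2*(A+1)+((j:ℝ)+1+1) = (2*A+(j:ℝ)+2+1)+1 by ring,
        show A+1+((j:ℝ)+1) = A+(j:ℝ)+2 by ring,
        show B+1+((j:ℝ)+1) = B+(j:ℝ)+2 by ring,
        show 2*(A+1)+((j:ℝ)+1) = (2*A+(j:ℝ)+2)+1 by ring,
        show 2*A+((j:ℝ)+1+1) = 2*A+(j:ℝ)+2 by ring,
        Real.Gamma_add_one (show (2*A+(j:ℝ)+2+1 : ℝ) ≠ 0 by positivity),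
        Real.Gamma_add_one (show (2*A+(j:ℝ)+2 : ℝ) ≠ 0 by positivity),
        Real.Gamma_add_one (show ((A+(j:ℝ)+2) : ℝ) ≠ 0 by positivity),
        Real.Gamma_add_one (show ((B+(j:ℝ)+2) : ℝ) ≠ 0 by positivity),
        Real.rpow_add_one hzi (A+(j:ℝ)+2)]
      set X := (z:ℝ)⁻¹ ^ (A+(j:ℝ)+2) with hX
      set G1 := Real.Gamma (A+(j:ℝ)+2) with hG1
      set G2 := Real.Gamma (B+(j:ℝ)+2) with hG2
      set G3 := Real.Gamma (2*A+(j:ℝ)+2) with hG3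
      set F := ((j.factorial : ℕ) : ℝ) with hF
      set J := ((j:ℕ) : ℝ) with hJ
      have hJ1 : J + 1 ≠ 0 := by positivity
      have hJ2 : J + 1 + 1 ≠ 0 := by positivity
      have n1 : (2*A+J+2+1) ≠ 0 := by positivity
      have n2 : (2*A+J+2) ≠ 0 := by positivity
      field_simp
      ring
  have hfin : (2*A - B + 1) * T (p + 2) - 2*(2*A + 1) * (z * T (p + 1))
        + (2*A + 1) * T (p + 1) + B * T p = 0 := by
    rw [show (fun m => (2*A - B + 1) * f1 m - 2*(2*A + 1) * (z * W (A + 1) (B + 1) (1/z) m)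
        + (2*A + 1) * f2 m + B * W A B (1/z) m) = (fun _ : ℕ => (0:ℝ)) from funext hzero] at key
    exact key.unique hasSum_zero
  have hc1 : ((p + 1 : ℕ) : ℝ) = (p : ℝ) + 1 := by push_cast; ring
  have hc2 : p + 1 + 1 = p + 2 := rfl
  have hc3 : p + 1 - 1 = p := rfl
  rw [hc2, hc3, hc1]
  linear_combination hfin
end

section
/- Define U_n = (−1)^n·₂F₁(1−a−n, a+n; 1+a−b; z). Then for all n ≥ 1, (2a−b+n)·U_{n+1} − (2z−1)(2a+2n−1)·U_n + (b+n−1)·U_{n−1} = 0. -/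
open scoped BigOperators
open Filter Polynomial Topology

noncomputable def hterm (c z x y : ℝ) (k : ℕ) : ℝ :=
  (ascPochhammer ℝ k).eval x * (ascPochhammer ℝ k).eval y /
    ((ascPochhammer ℝ k).eval c * (k.factorial : ℝ)) * z ^ k

lemma F21_eq_tsum (x y c z : ℝ) : F21 x y c z = ∑' k, hterm c z x y k := rfl

lemma poch_succ_left_eval (x : ℝ) (m : ℕ) :
    (ascPochhammer ℝ (m + 1)).eval x = x * (ascPochhammer ℝ m).eval (x + 1) := by
  rw [ascPochhammer_succ_left]
  simp [Polynomial.eval_comp]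

lemma poch_ne_zero {c : ℝ} (hc : ∀ k : ℕ, c + (k : ℝ) ≠ 0) :
    ∀ k : ℕ, (ascPochhammer ℝ k).eval c ≠ 0 := by
  intro k
  induction k with
  | zero => simp
  | succ n ih =>
    rw [ascPochhammer_succ_eval]
    exact mul_ne_zero ih (hc n)

lemma summable_hterm {c z : ℝ} (hc : ∀ k : ℕ, c + (k : ℝ) ≠ 0) (hz : |z| < 1) (x y : ℝ) :
    Summable (hterm c z x y) := by
  have hpoch := poch_ne_zero hc
  have hrec : ∀ k : ℕ, hterm c z x y (k + 1) =
      hterm c z x y k * ((x + k) * (y + k) * z / ((c + k) * (k + 1))) := by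
    intro k
    have h1 := hpoch k
    have h2 := hc k
    have h3 : ((k.factorial : ℝ)) ≠ 0 := Nat.cast_ne_zero.2 (Nat.factorial_ne_zero k)
    have h4 : ((k : ℝ) + 1) ≠ 0 := by positivity
    simp only [hterm, ascPochhammer_succ_eval, Nat.factorial_succ, pow_succ, Nat.cast_mul,
      Nat.cast_add, Nat.cast_one]
    field_simp
  have hk1 : Tendsto (fun k : ℕ => ((k : ℝ) + 1)) atTop atTop :=
    tendsto_atTop_add_const_right atTop 1 tendsto_natCast_atTop_atTop
  have hck : Tendsto (fun k : ℕ => c + (k : ℝ)) atTop atTop :=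
    tendsto_atTop_add_const_left atTop c tendsto_natCast_atTop_atTop
  have t1 : Tendsto (fun k : ℕ => (x + k) / ((k : ℝ) + 1)) atTop (𝓝 1) := by
    have heq : ∀ k : ℕ, (x + k) / ((k : ℝ) + 1) = 1 + (x - 1) / ((k : ℝ) + 1) := by
      intro k
      have h4 : ((k : ℝ) + 1) ≠ 0 := by positivity
      field_simp
      ring
    simp only [heq]
    have h0 : Tendsto (fun k : ℕ => (x - 1) / ((k : ℝ) + 1)) atTop (𝓝 0) :=
      Tendsto.div_atTop tendsto_const_nhds hk1
    simpa using (tendsto_const_nhds (x := (1:ℝ))).add h0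
  have t2 : Tendsto (fun k : ℕ => (y + k) / (c + (k : ℝ))) atTop (𝓝 1) := by
    have heq : ∀ k : ℕ, (y + k) / (c + (k : ℝ)) = 1 + (y - c) / (c + (k : ℝ)) := by
      intro k
      have h2 := hc k
      field_simp
      ring
    simp only [heq]
    have h0 : Tendsto (fun k : ℕ => (y - c) / (c + (k : ℝ))) atTop (𝓝 0) :=
      Tendsto.div_atTop tendsto_const_nhds hck
    simpa using (tendsto_const_nhds (x := (1:ℝ))).add h0
  have hlim : Tendsto (fun k : ℕ => |(x + k) * (y + k) * z / ((c + k) * ((k : ℝ) + 1))|)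
      atTop (𝓝 |z|) := by
    have heq : ∀ k : ℕ, (x + k) * (y + k) * z / ((c + k) * ((k : ℝ) + 1)) =
        ((x + k) / ((k : ℝ) + 1)) * ((y + k) / (c + (k : ℝ))) * z := by
      intro k
      simp only [div_eq_mul_inv, mul_inv]
      ring
    simp only [heq]
    have := ((t1.mul t2).mul (tendsto_const_nhds (x := z))).abs
    simpa using this
  set r : ℝ := (1 + |z|) / 2 with hr
  have hr1 : r < 1 := by rw [hr]; linarith
  have hzr : |z| < r := by rw [hr]; linarith
  refine summable_of_ratio_norm_eventually_le hr1 ?_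
  filter_upwards [hlim.eventually_le_const hzr] with k hk
  rw [hrec k, norm_mul, mul_comm, Real.norm_eq_abs]
  exact mul_le_mul_of_nonneg_right hk (norm_nonneg _)

noncomputable def gshift (c z v : ℝ) : ℕ → ℝ := fun k =>
  match k with
  | 0 => 0
  | (k + 1) => 2 * (2 * v - 1) * z * hterm c z (1 - v) v k

set_option maxHeartbeats 2000000 in
lemma key_rel {c z : ℝ} (hc : ∀ k : ℕ, c + (k : ℝ) ≠ 0) (hz : |z| < 1) (v : ℝ) :
    (c + v - 1) * F21 (-v) (v + 1) c z + (2 * z - 1) * (2 * v - 1) * F21 (1 - v) v c z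
      + (v - c) * F21 (2 - v) (v - 1) c z = 0 := by
  have hpoch := poch_ne_zero hc
  have h1 : Summable (hterm c z (-v) (v + 1)) := summable_hterm hc hz _ _
  have h2 : Summable (hterm c z (1 - v) v) := summable_hterm hc hz _ _
  have h3 : Summable (hterm c z (2 - v) (v - 1)) := summable_hterm hc hz _ _
  have hg : Summable (gshift c z v) := by
    refine (summable_nat_add_iff 1).mp ?_
    exact (h2.mul_left (2 * (2 * v - 1) * z))
  have hgsum : ∑' k, gshift c z v k = 2 * (2 * v - 1) * z * ∑' k, hterm c z (1 - v) v k := by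
    rw [Summable.tsum_eq_zero_add hg]
    show (0 : ℝ) + ∑' k, 2 * (2 * v - 1) * z * hterm c z (1 - v) v k = _
    rw [zero_add, tsum_mul_left]
  have hzero : ∀ k : ℕ, (c + v - 1) * hterm c z (-v) (v + 1) k
      - (2 * v - 1) * hterm c z (1 - v) v k
      + (v - c) * hterm c z (2 - v) (v - 1) k + gshift c z v k = 0 := by
    intro k
    cases k with
    | zero =>
      simp only [hterm, gshift, ascPochhammer_zero, Polynomial.eval_one, Nat.factorial_zero,
        Nat.cast_one, pow_zero, mul_one, one_mul, div_one]
      ring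
    | succ k =>
      set P := (ascPochhammer ℝ k).eval (1 - v) with hP
      set Q := (ascPochhammer ℝ k).eval v with hQ
      set P' := (ascPochhammer ℝ k).eval (2 - v) with hP'
      set Q' := (ascPochhammer ℝ k).eval (v + 1) with hQ'
      set Dc := (ascPochhammer ℝ k).eval c with hDc
      have a1 : (-v : ℝ) + 1 = 1 - v := by ring
      have a2 : (v : ℝ) - 1 + 1 = v := by ring
      have a3 : (1 : ℝ) - v + 1 = 2 - v := by ring
      have e3 : (ascPochhammer ℝ (k + 1)).eval (-v) = -v * P := by
        rw [poch_succ_left_eval, a1]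
      have e6 : (ascPochhammer ℝ (k + 1)).eval (v - 1) = (v - 1) * Q := by
        rw [poch_succ_left_eval, a2]
      have hcross1 : P * (1 - v + k) = (1 - v) * P' := by
        rw [hP, hP', ← ascPochhammer_succ_eval, poch_succ_left_eval, a3]
      have hcross2 : Q * (v + k) = v * Q' := by
        rw [hQ, hQ', ← ascPochhammer_succ_eval, poch_succ_left_eval]
      have num : (c + v - 1) * ((-v) * P) * (Q' * (v + 1 + k))
          - (2 * v - 1) * (P * (1 - v + k)) * (Q * (v + k))
          + (v - c) * (P' * (2 - v + k)) * ((v - 1) * Q)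
          + 2 * (2 * v - 1) * (P * Q) * ((c + k) * (k + 1)) = 0 := by
        linear_combination ((v - c) * (2 - v + k) * Q) * hcross1
          + ((c + v - 1) * (v + 1 + k) * P) * hcross2
      have hDcne : Dc ≠ 0 := hpoch k
      have hckne : c + (k : ℝ) ≠ 0 := hc k
      have hfne : ((k.factorial : ℝ)) ≠ 0 := Nat.cast_ne_zero.2 (Nat.factorial_ne_zero k)
      have hk1ne : ((k : ℝ) + 1) ≠ 0 := by positivity
      show (c + v - 1) * hterm c z (-v) (v + 1) (k + 1)
          - (2 * v - 1) * hterm c z (1 - v) v (k + 1)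
          + (v - c) * hterm c z (2 - v) (v - 1) (k + 1)
          + 2 * (2 * v - 1) * z * hterm c z (1 - v) v k = 0
      simp only [hterm, ascPochhammer_succ_eval, e3, e6, Nat.factorial_succ, pow_succ,
        Nat.cast_mul, Nat.cast_add, Nat.cast_one, ← hP, ← hQ, ← hP', ← hQ', ← hDc]
      have hg4 : 2 * (2 * v - 1) * z * (P * Q / (Dc * (k.factorial : ℝ)) * z ^ k) =
          2 * (2 * v - 1) * (P * Q) * ((c + (k : ℝ)) * ((k : ℝ) + 1)) * (z ^ k * z) /
            (Dc * (c + (k : ℝ)) * (((k : ℝ) + 1) * (k.factorial : ℝ))) := by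
        field_simp
      linear_combination hg4 + (z ^ k * z /
        (Dc * (c + (k : ℝ)) * (((k : ℝ) + 1) * (k.factorial : ℝ)))) * num
  have hsum0 : ∑' k, ((c + v - 1) * hterm c z (-v) (v + 1) k
      - (2 * v - 1) * hterm c z (1 - v) v k
      + (v - c) * hterm c z (2 - v) (v - 1) k + gshift c z v k) = (0 : ℝ) := by
    rw [tsum_congr hzero]
    exact tsum_zero
  rw [Summable.tsum_add (((h1.mul_left _).sub (h2.mul_left _)).add (h3.mul_left _)) hg,
    Summable.tsum_add ((h1.mul_left _).sub (h2.mul_left _)) (h3.mul_left _),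
    Summable.tsum_sub (h1.mul_left _) (h2.mul_left _), tsum_mul_left, tsum_mul_left, tsum_mul_left,
    hgsum] at hsum0
  rw [F21_eq_tsum, F21_eq_tsum, F21_eq_tsum]
  linear_combination hsum0

theorem stmt3 (a b z : ℝ) (hab : ∀ k : ℕ, 1 + a - b ≠ -(k : ℝ)) (hz : |z| < 1) (U : ℕ → ℝ)
    (hU : ∀ n : ℕ, U n = (-1) ^ n * F21 (1 - a - n) (a + n) (1 + a - b) z) :
    ∀ n : ℕ, 1 ≤ n →
      (2 * a - b + n) * U (n + 1) - (2 * z - 1) * (2 * a + 2 * n - 1) * U n +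
        (b + n - 1) * U (n - 1) = 0 := by
  intro n hn
  obtain ⟨m, rfl⟩ : ∃ m, n = m + 1 := ⟨n - 1, (Nat.succ_pred_eq_of_pos hn).symm⟩
  have hc : ∀ k : ℕ, (1 + a - b) + (k : ℝ) ≠ 0 := by
    intro k h
    exact hab k (by linarith)
  have hK := key_rel hc hz (a + (m : ℝ) + 1)
  have e1 : -(a + (m : ℝ) + 1) = 1 - a - ((m + 1 + 1 : ℕ) : ℝ) := by push_cast; ring
  have e2 : (a + (m : ℝ) + 1) + 1 = a + ((m + 1 + 1 : ℕ) : ℝ) := by push_cast; ring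
  have e3 : 1 - (a + (m : ℝ) + 1) = 1 - a - ((m + 1 : ℕ) : ℝ) := by push_cast; ring
  have e4 : (a + (m : ℝ) + 1) = a + ((m + 1 : ℕ) : ℝ) := by push_cast; ring
  have e5 : 2 - (a + (m : ℝ) + 1) = 1 - a - ((m : ℕ) : ℝ) := by ring
  have e6 : (a + (m : ℝ) + 1) - 1 = a + ((m : ℕ) : ℝ) := by ring
  rw [e1, e2, e5, e6] at hK
  rw [e3, e4] at hK
  simp only [Nat.add_sub_cancel] at *
  rw [hU (m + 1 + 1), hU (m + 1), hU m]
  push_cast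
  push_cast at hK
  linear_combination ((-1 : ℝ) ^ m) * hK
end

section
/- Let D ≥ 2, A, K, Z = A/D, B = 1/D be rationals with K ≠ 0, and let (v_n) satisfy (n+B)v_{n+1} = Z·n·v_n + K(B−n)v_{n−1} for n ≥ 1 with given v_0, v_1. Define Λ_i = ∏_{m=−i}^{i−1}(B+m), P_n = ∑_{j=0}^{⌊n/2⌋} (−1)^j K^{n−j} (Z/K)^{n−2j} ((n−j)!/(n−2j)!) ∑_{i=0}^{j} (−1)^i (n−i)!/(i!² (j−i)!) · Λ_i, and Q_n = (B−1) ∑_{j=0}^{⌊(n−1)/2⌋} (−1)^j K^{n−j} (Z/K)^{n−2j−1} ((n−j−1)!/(n−2j−1)!) ∑_{i=0}^{j} (−1)^i (n−i)!/(i!(i+1)!(j−i)!) · Λ_i. Then for all n ≥ 0, v_{n+1} = (P_n/(B+1)_n)·v_1 + (Q_n/(B+1)_n)·v_0, where (B+1)_n is the rising Pochhammer symbol. -/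
open scoped BigOperators
open Finset

def lamB (B : ℚ) (i : ℕ) : ℚ := ∏ t ∈ Finset.range (2 * i), (B + (t : ℚ) - (i : ℚ))

lemma lamB_zero (B : ℚ) : lamB B 0 = 1 := by simp [lamB]

lemma lamB_succ (B : ℚ) (i : ℕ) :
    lamB B (i + 1) = lamB B i * ((B + i) * (B - 1 - i)) := by
  unfold lamB
  rw [show 2 * (i + 1) = (2 * i + 1) + 1 by ring, Finset.prod_range_succ,
    Finset.prod_range_succ']
  have h : ∀ t ∈ Finset.range (2 * i), (B + ((t : ℕ) + 1 : ℕ) - ((i : ℕ) + 1 : ℕ) : ℚ)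
      = B + (t : ℚ) - (i : ℚ) := by
    intro t _; push_cast; ring
  rw [Finset.prod_congr rfl h]
  push_cast; ring

lemma factq1 (m : ℕ) : (((m + 1).factorial : ℚ)) = ((m : ℚ) + 1) * m.factorial := by
  rw [Nat.factorial_succ]; push_cast; ring
lemma factq2 (m : ℕ) : (((m + 2).factorial : ℚ)) = ((m : ℚ) + 2) * ((m : ℚ) + 1) * m.factorial := by
  rw [show m + 2 = (m + 1) + 1 by omega, factq1, factq1]; push_cast; ring
lemma factq3 (m : ℕ) : (((m + 3).factorial : ℚ))
    = ((m : ℚ) + 3) * ((m : ℚ) + 2) * ((m : ℚ) + 1) * m.factorial := by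
  rw [show m + 3 = (m + 2) + 1 by omega, factq1, factq2]; push_cast; ring
lemma factq4 (m : ℕ) : (((m + 4).factorial : ℚ))
    = ((m : ℚ) + 4) * ((m : ℚ) + 3) * ((m : ℚ) + 2) * ((m : ℚ) + 1) * m.factorial := by
  rw [show m + 4 = (m + 3) + 1 by omega, factq1, factq3]; push_cast; ring
lemma factq_ne (m : ℕ) : ((m.factorial : ℚ)) ≠ 0 :=
  Nat.cast_ne_zero.mpr m.factorial_ne_zero

def gcP (K Z : ℚ) (n j i : ℕ) : ℚ :=
  if 2 * j ≤ n ∧ i ≤ j then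
    (-1 : ℚ) ^ (j + i) * K ^ j * Z ^ (n - 2 * j) *
      (((n - j).factorial : ℚ) * ((n - i).factorial : ℚ)) /
      (((n - 2 * j).factorial : ℚ) * ((i.factorial : ℚ)) ^ 2 * ((j - i).factorial : ℚ))
  else 0

def gcQ (K Z : ℚ) (n j i : ℕ) : ℚ :=
  if 2 * j + 1 ≤ n ∧ i ≤ j then
    (-1 : ℚ) ^ (j + i) * K ^ (j + 1) * Z ^ (n - 2 * j - 1) *
      (((n - j - 1).factorial : ℚ) * ((n - i).factorial : ℚ)) /
      (((n - 2 * j - 1).factorial : ℚ) * (i.factorial : ℚ) * ((i + 1).factorial : ℚ) *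
        ((j - i).factorial : ℚ))
  else 0

lemma gcP_zero (K Z : ℚ) {n j i : ℕ} (h : ¬(2 * j ≤ n ∧ i ≤ j)) : gcP K Z n j i = 0 :=
  if_neg h
lemma gcQ_zero (K Z : ℚ) {n j i : ℕ} (h : ¬(2 * j + 1 ≤ n ∧ i ≤ j)) : gcQ K Z n j i = 0 :=
  if_neg h

def shP (K Z B : ℚ) (n : ℕ) : ℕ → ℕ → ℚ
  | 0, _ => 0
  | j + 1, 0 => -(K * ((n : ℚ) + 1) * ((n : ℚ) + 2) * gcP K Z n j 0 * lamB B 0)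
  | j + 1, i + 1 => K * gcP K Z n j i * lamB B (i + 1)
      - K * ((n : ℚ) - (i : ℚ)) * ((n : ℚ) + (i : ℚ) + 3) * gcP K Z n j (i + 1) * lamB B (i + 1)

def shQ (K Z B : ℚ) (n : ℕ) : ℕ → ℕ → ℚ
  | 0, _ => 0
  | j + 1, 0 => -(K * ((n : ℚ) + 1) * ((n : ℚ) + 2) * gcQ K Z n j 0 * lamB B 0)
  | j + 1, i + 1 => K * gcQ K Z n j i * lamB B (i + 1)
      - K * ((n : ℚ) - (i : ℚ)) * ((n : ℚ) + (i : ℚ) + 3) * gcQ K Z n j (i + 1) * lamB B (i + 1)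

lemma fact_eq (x y : ℕ) (h : x = y + 1) : ((x.factorial : ℚ)) = ((y : ℚ) + 1) * y.factorial := by
  subst h; exact factq1 y

set_option maxHeartbeats 1600000 in
lemma keyP (K Z B : ℚ) (n j i : ℕ) :
    gcP K Z (n + 2) j i * lamB B i
      = Z * ((n : ℚ) + 2) * (gcP K Z (n + 1) j i * lamB B i) + shP K Z B n j i := by
  obtain _ | j := j <;> obtain _ | i := i
  · simp only [shP, gcP, lamB_zero]
    rw [if_pos (show 2*0 ≤ n+2 ∧ 0 ≤ 0 by omega), if_pos (show 2*0 ≤ n+1 ∧ 0 ≤ 0 by omega)]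
    simp only [Nat.mul_zero, Nat.sub_zero, Nat.sub_self]
    rw [fact_eq (n+2) (n+1) (by omega), fact_eq (n+1) n (by omega)]
    try simp only [Nat.factorial_zero]
    have h1 := factq_ne n
    push_cast; field_simp; ring
  · simp only [shP]
    rw [gcP_zero _ _ (by omega), gcP_zero _ _ (by omega)]; ring
  · rcases (show n < 2*j ∨ n = 2*j ∨ 2*j+1 ≤ n by omega) with h | h | h
    · simp only [shP, lamB_zero]
      rw [gcP_zero _ _ (by omega), gcP_zero _ _ (by omega), gcP_zero _ _ (by omega)]; ring
    · subst h
      simp only [shP, gcP, lamB_zero]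
      rw [if_pos (show 2*(j+1) ≤ 2*j+2 ∧ 0 ≤ j+1 by omega),
        if_neg (show ¬(2*(j+1) ≤ 2*j+1 ∧ 0 ≤ j+1) by omega),
        if_pos (show 2*j ≤ 2*j ∧ 0 ≤ j by omega),
        show 2*j+2-2*(j+1) = 0 by omega, show 2*j+2-(j+1) = j+1 by omega,
        show 2*j+2-0 = 2*j+2 by omega, show j+1-0 = j+1 by omega,
        show 2*j-2*j = 0 by omega, show 2*j-j = j by omega,
        show 2*j-0 = 2*j by omega, show j-0 = j by omega,
        fact_eq (2*j+2) (2*j+1) (by omega), fact_eq (2*j+1) (2*j) (by omega),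
        fact_eq (j+1) j (by omega)]
      try simp only [Nat.factorial_zero]
      have h1 := factq_ne (2*j); have h2 := factq_ne j
      have h3 : ((j:ℚ)+1) ≠ 0 := by positivity
      push_cast; field_simp; ring
    · obtain ⟨a, rfl⟩ : ∃ a, n = 2*j+1+a := ⟨n - (2*j+1), by omega⟩
      simp only [shP, gcP, lamB_zero]
      rw [if_pos (show 2*(j+1) ≤ 2*j+1+a+2 ∧ 0 ≤ j+1 by omega),
          if_pos (show 2*(j+1) ≤ 2*j+1+a+1 ∧ 0 ≤ j+1 by omega),
          if_pos (show 2*j ≤ 2*j+1+a ∧ 0 ≤ j by omega),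
          show 2*j+1+a+2 - 2*(j+1) = a+1 by omega,
          show 2*j+1+a+2 - (j+1) = j+a+2 by omega,
          show 2*j+1+a+2 - 0 = 2*j+a+3 by omega,
          show j+1-0 = j+1 by omega,
          show 2*j+1+a+1 - 2*(j+1) = a by omega,
          show 2*j+1+a+1 - (j+1) = j+a+1 by omega,
          show 2*j+1+a+1 - 0 = 2*j+a+2 by omega,
          show 2*j+1+a - 2*j = a+1 by omega,
          show 2*j+1+a - j = j+a+1 by omega,
          show 2*j+1+a - 0 = 2*j+a+1 by omega,
          show j - 0 = j by omega,
          fact_eq (j+a+2) (j+a+1) (by omega),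
          fact_eq (2*j+a+3) (2*j+a+2) (by omega), fact_eq (2*j+a+2) (2*j+a+1) (by omega),
          fact_eq (a+1) a (by omega), fact_eq (j+1) j (by omega)]
      try simp only [Nat.factorial_zero]
      have h1 := factq_ne (j+a+1); have h2 := factq_ne (2*j+a+1)
      have h3 := factq_ne a; have h4 := factq_ne j
      have h5 : ((a:ℚ)+1) ≠ 0 := by positivity
      have h6 : ((j:ℚ)+1) ≠ 0 := by positivity
      push_cast; field_simp; ring
  · rcases (show (n < 2*j ∨ j < i) ∨ (n = 2*j ∧ i = j) ∨ (n = 2*j ∧ i+1 ≤ j)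
        ∨ (2*j+1 ≤ n ∧ i = j) ∨ (2*j+1 ≤ n ∧ i+1 ≤ j) by omega) with h | h | h | h | h
    · simp only [shP]
      rw [gcP_zero _ _ (by omega), gcP_zero _ _ (by omega),
        gcP_zero _ _ (by omega), gcP_zero _ _ (by omega)]
      ring
    · obtain ⟨rfl, rfl⟩ := h
      simp only [shP, gcP]
      rw [if_pos (show 2*(i+1) ≤ 2*i+2 ∧ i+1 ≤ i+1 by omega),
        if_neg (show ¬(2*(i+1) ≤ 2*i+1 ∧ i+1 ≤ i+1) by omega),
        if_pos (show 2*i ≤ 2*i ∧ i ≤ i by omega),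
        if_neg (show ¬(2*i ≤ 2*i ∧ i+1 ≤ i) by omega),
        show 2*i+2-2*(i+1) = 0 by omega, show 2*i+2-(i+1) = i+1 by omega,
        show (i+1)-(i+1) = 0 by omega,
        show 2*i-2*i = 0 by omega, show 2*i-i = i by omega, show i-i = 0 by omega,
        fact_eq (i+1) i (by omega)]
      try simp only [Nat.factorial_zero]
      have h1 := factq_ne i
      have h2 : ((i:ℚ)+1) ≠ 0 := by positivity
      push_cast; field_simp; ring
    · obtain ⟨rfl, hij⟩ := h
      obtain ⟨c, rfl⟩ : ∃ c, j = i+1+c := ⟨j - (i+1), by omega⟩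
      simp only [shP, gcP]
      rw [if_pos (show 2*(i+1+c+1) ≤ 2*(i+1+c)+2 ∧ i+1 ≤ i+1+c+1 by omega),
        if_neg (show ¬(2*(i+1+c+1) ≤ 2*(i+1+c)+1 ∧ i+1 ≤ i+1+c+1) by omega),
        if_pos (show 2*(i+1+c) ≤ 2*(i+1+c) ∧ i ≤ i+1+c by omega),
        if_pos (show 2*(i+1+c) ≤ 2*(i+1+c) ∧ i+1 ≤ i+1+c by omega),
        show 2*(i+1+c)+2 - 2*(i+1+c+1) = 0 by omega,
        show 2*(i+1+c)+2 - (i+1+c+1) = i+c+2 by omega,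
        show 2*(i+1+c)+2 - (i+1) = i+2*c+3 by omega,
        show (i+1+c+1) - (i+1) = c+1 by omega,
        show 2*(i+1+c) - 2*(i+1+c) = 0 by omega,
        show 2*(i+1+c) - (i+1+c) = i+c+1 by omega,
        show 2*(i+1+c) - i = i+2*c+2 by omega,
        show (i+1+c) - i = c+1 by omega,
        show 2*(i+1+c) - (i+1) = i+2*c+1 by omega,
        show (i+1+c) - (i+1) = c by omega,
        fact_eq (i+c+2) (i+c+1) (by omega),
        fact_eq (i+2*c+3) (i+2*c+2) (by omega), fact_eq (i+2*c+2) (i+2*c+1) (by omega),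
        fact_eq (c+1) c (by omega), fact_eq (i+1) i (by omega)]
      try simp only [Nat.factorial_zero]
      have h1 := factq_ne (i+c+1); have h2 := factq_ne (i+2*c+1)
      have h3 := factq_ne c; have h4 := factq_ne i
      have h5 : ((c:ℚ)+1) ≠ 0 := by positivity
      have h6 : ((i:ℚ)+1) ≠ 0 := by positivity
      push_cast; field_simp; ring
    · obtain ⟨hn, rfl⟩ := h
      obtain ⟨a, rfl⟩ : ∃ a, n = 2*i+1+a := ⟨n - (2*i+1), by omega⟩
      simp only [shP, gcP]
      rw [if_pos (show 2*(i+1) ≤ 2*i+1+a+2 ∧ i+1 ≤ i+1 by omega),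
        if_pos (show 2*(i+1) ≤ 2*i+1+a+1 ∧ i+1 ≤ i+1 by omega),
        if_pos (show 2*i ≤ 2*i+1+a ∧ i ≤ i by omega),
        if_neg (show ¬(2*i ≤ 2*i+1+a ∧ i+1 ≤ i) by omega),
        show 2*i+1+a+2 - 2*(i+1) = a+1 by omega,
        show 2*i+1+a+2 - (i+1) = i+a+2 by omega,
        show (i+1)-(i+1) = 0 by omega,
        show 2*i+1+a+1 - 2*(i+1) = a by omega,
        show 2*i+1+a+1 - (i+1) = i+a+1 by omega,
        show 2*i+1+a - 2*i = a+1 by omega,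
        show 2*i+1+a - i = i+a+1 by omega,
        show i-i = 0 by omega,
        fact_eq (i+a+2) (i+a+1) (by omega),
        fact_eq (a+1) a (by omega), fact_eq (i+1) i (by omega)]
      try simp only [Nat.factorial_zero]
      have h1 := factq_ne (i+a+1); have h2 := factq_ne a; have h3 := factq_ne i
      have h4 : ((a:ℚ)+1) ≠ 0 := by positivity
      have h5 : ((i:ℚ)+1) ≠ 0 := by positivity
      push_cast; field_simp; ring
    · obtain ⟨hn, hij⟩ := h
      obtain ⟨c, rfl⟩ : ∃ c, j = i+1+c := ⟨j - (i+1), by omega⟩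
      obtain ⟨a, rfl⟩ : ∃ a, n = 2*(i+1+c)+1+a := ⟨n - (2*(i+1+c)+1), by omega⟩
      simp only [shP, gcP]
      rw [if_pos (show 2*(i+1+c+1) ≤ 2*(i+1+c)+1+a+2 ∧ i+1 ≤ i+1+c+1 by omega),
        if_pos (show 2*(i+1+c+1) ≤ 2*(i+1+c)+1+a+1 ∧ i+1 ≤ i+1+c+1 by omega),
        if_pos (show 2*(i+1+c) ≤ 2*(i+1+c)+1+a ∧ i ≤ i+1+c by omega),
        if_pos (show 2*(i+1+c) ≤ 2*(i+1+c)+1+a ∧ i+1 ≤ i+1+c by omega),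
        show 2*(i+1+c)+1+a+2 - 2*(i+1+c+1) = a+1 by omega,
        show 2*(i+1+c)+1+a+2 - (i+1+c+1) = i+c+a+3 by omega,
        show 2*(i+1+c)+1+a+2 - (i+1) = i+2*c+a+4 by omega,
        show (i+1+c+1) - (i+1) = c+1 by omega,
        show 2*(i+1+c)+1+a+1 - 2*(i+1+c+1) = a by omega,
        show 2*(i+1+c)+1+a+1 - (i+1+c+1) = i+c+a+2 by omega,
        show 2*(i+1+c)+1+a+1 - (i+1) = i+2*c+a+3 by omega,
        show 2*(i+1+c)+1+a - 2*(i+1+c) = a+1 by omega,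
        show 2*(i+1+c)+1+a - (i+1+c) = i+c+a+2 by omega,
        show 2*(i+1+c)+1+a - i = i+2*c+a+3 by omega,
        show (i+1+c) - i = c+1 by omega,
        show 2*(i+1+c)+1+a - (i+1) = i+2*c+a+2 by omega,
        show (i+1+c) - (i+1) = c by omega,
        fact_eq (i+c+a+3) (i+c+a+2) (by omega),
        fact_eq (i+2*c+a+4) (i+2*c+a+3) (by omega),
        fact_eq (i+2*c+a+3) (i+2*c+a+2) (by omega),
        fact_eq (a+1) a (by omega), fact_eq (c+1) c (by omega), fact_eq (i+1) i (by omega)]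
      try simp only [Nat.factorial_zero]
      have h1 := factq_ne (i+c+a+2); have h2 := factq_ne (i+2*c+a+2)
      have h3 := factq_ne a; have h4 := factq_ne c; have h5 := factq_ne i
      have h6 : ((a:ℚ)+1) ≠ 0 := by positivity
      have h7 : ((c:ℚ)+1) ≠ 0 := by positivity
      have h8 : ((i:ℚ)+1) ≠ 0 := by positivity
      push_cast; field_simp; ring

set_option maxHeartbeats 1600000 in
lemma keyQ (K Z B : ℚ) (n j i : ℕ) :
    gcQ K Z (n + 2) j i * lamB B i
      = Z * ((n : ℚ) + 2) * (gcQ K Z (n + 1) j i * lamB B i) + shQ K Z B n j i := by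
  obtain _ | j := j <;> obtain _ | i := i
  · simp only [shQ, gcQ, lamB_zero]
    rw [if_pos (show 2*0+1 ≤ n+2 ∧ 0 ≤ 0 by omega), if_pos (show 2*0+1 ≤ n+1 ∧ 0 ≤ 0 by omega)]
    simp only [Nat.mul_zero, Nat.sub_zero, Nat.sub_self]
    rw [show n+2-1 = n+1 by omega, show n+1-1 = n by omega,
      fact_eq (n+2) (n+1) (by omega), fact_eq (n+1) n (by omega)]
    try simp only [Nat.factorial_zero]
    have h1 := factq_ne n
    push_cast; field_simp; ring
  · simp only [shQ]
    rw [gcQ_zero _ _ (by omega), gcQ_zero _ _ (by omega)]; ring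
  · rcases (show n ≤ 2*j ∨ n = 2*j+1 ∨ 2*j+2 ≤ n by omega) with h | h | h
    · simp only [shQ, lamB_zero]
      rw [gcQ_zero _ _ (by omega), gcQ_zero _ _ (by omega), gcQ_zero _ _ (by omega)]; ring
    · subst h
      simp only [shQ, gcQ, lamB_zero]
      rw [if_pos (show 2*(j+1)+1 ≤ 2*j+1+2 ∧ 0 ≤ j+1 by omega),
        if_neg (show ¬(2*(j+1)+1 ≤ 2*j+1+1 ∧ 0 ≤ j+1) by omega),
        if_pos (show 2*j+1 ≤ 2*j+1 ∧ 0 ≤ j by omega),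
        show 2*j+1+2-2*(j+1)-1 = 0 by omega, show 2*j+1+2-(j+1)-1 = j+1 by omega,
        show 2*j+1+2-0 = 2*j+3 by omega, show j+1-0 = j+1 by omega,
        show 2*j+1-2*j-1 = 0 by omega, show 2*j+1-j-1 = j by omega,
        show 2*j+1-0 = 2*j+1 by omega, show j-0 = j by omega,
        fact_eq (2*j+3) (2*j+2) (by omega), fact_eq (2*j+2) (2*j+1) (by omega),
        fact_eq (j+1) j (by omega)]
      try simp only [Nat.factorial_zero]
      have h1 := factq_ne (2*j+1); have h2 := factq_ne j
      have h3 : ((j:ℚ)+1) ≠ 0 := by positivity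
      push_cast; field_simp; ring
    · obtain ⟨a, rfl⟩ : ∃ a, n = 2*j+2+a := ⟨n - (2*j+2), by omega⟩
      simp only [shQ, gcQ, lamB_zero]
      rw [if_pos (show 2*(j+1)+1 ≤ 2*j+2+a+2 ∧ 0 ≤ j+1 by omega),
          if_pos (show 2*(j+1)+1 ≤ 2*j+2+a+1 ∧ 0 ≤ j+1 by omega),
          if_pos (show 2*j+1 ≤ 2*j+2+a ∧ 0 ≤ j by omega),
          show 2*j+2+a+2 - 2*(j+1) - 1 = a+1 by omega,
          show 2*j+2+a+2 - (j+1) - 1 = j+a+2 by omega,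
          show 2*j+2+a+2 - 0 = 2*j+a+4 by omega,
          show j+1-0 = j+1 by omega,
          show 2*j+2+a+1 - 2*(j+1) - 1 = a by omega,
          show 2*j+2+a+1 - (j+1) - 1 = j+a+1 by omega,
          show 2*j+2+a+1 - 0 = 2*j+a+3 by omega,
          show 2*j+2+a - 2*j - 1 = a+1 by omega,
          show 2*j+2+a - j - 1 = j+a+1 by omega,
          show 2*j+2+a - 0 = 2*j+a+2 by omega,
          show j - 0 = j by omega,
          fact_eq (j+a+2) (j+a+1) (by omega),
          fact_eq (2*j+a+4) (2*j+a+3) (by omega), fact_eq (2*j+a+3) (2*j+a+2) (by omega),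
          fact_eq (a+1) a (by omega), fact_eq (j+1) j (by omega)]
      try simp only [Nat.factorial_zero]
      have h1 := factq_ne (j+a+1); have h2 := factq_ne (2*j+a+2)
      have h3 := factq_ne a; have h4 := factq_ne j
      have h5 : ((a:ℚ)+1) ≠ 0 := by positivity
      have h6 : ((j:ℚ)+1) ≠ 0 := by positivity
      push_cast; field_simp; ring
  · rcases (show (n ≤ 2*j ∨ j < i) ∨ (n = 2*j+1 ∧ i = j) ∨ (n = 2*j+1 ∧ i+1 ≤ j)
        ∨ (2*j+2 ≤ n ∧ i = j) ∨ (2*j+2 ≤ n ∧ i+1 ≤ j) by omega) with h | h | h | h | h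
    · simp only [shQ]
      rw [gcQ_zero _ _ (by omega), gcQ_zero _ _ (by omega),
        gcQ_zero _ _ (by omega), gcQ_zero _ _ (by omega)]
      ring
    · obtain ⟨rfl, rfl⟩ := h
      simp only [shQ, gcQ]
      rw [if_pos (show 2*(i+1)+1 ≤ 2*i+1+2 ∧ i+1 ≤ i+1 by omega),
        if_neg (show ¬(2*(i+1)+1 ≤ 2*i+1+1 ∧ i+1 ≤ i+1) by omega),
        if_pos (show 2*i+1 ≤ 2*i+1 ∧ i ≤ i by omega),
        if_neg (show ¬(2*i+1 ≤ 2*i+1 ∧ i+1 ≤ i) by omega),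
        show 2*i+1+2-2*(i+1)-1 = 0 by omega, show 2*i+1+2-(i+1)-1 = i+1 by omega,
        show 2*i+1+2-(i+1) = i+2 by omega, show (i+1)-(i+1) = 0 by omega,
        show 2*i+1-2*i-1 = 0 by omega, show 2*i+1-i-1 = i by omega,
        show 2*i+1-i = i+1 by omega, show i-i = 0 by omega,
        fact_eq (i+1+1) (i+1) (by omega),
        fact_eq (i+1) i (by omega)]
      try simp only [Nat.factorial_zero]
      have h1 := factq_ne i
      have h2 : ((i:ℚ)+1) ≠ 0 := by positivity
      push_cast; field_simp
      try ring
      try exact Or.inl trivial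
    · obtain ⟨hn, hij⟩ := h
      obtain ⟨c, rfl⟩ : ∃ c, j = i+1+c := ⟨j - (i+1), by omega⟩
      subst hn
      simp only [shQ, gcQ]
      rw [if_pos (show 2*(i+1+c+1)+1 ≤ 2*(i+1+c)+1+2 ∧ i+1 ≤ i+1+c+1 by omega),
        if_neg (show ¬(2*(i+1+c+1)+1 ≤ 2*(i+1+c)+1+1 ∧ i+1 ≤ i+1+c+1) by omega),
        if_pos (show 2*(i+1+c)+1 ≤ 2*(i+1+c)+1 ∧ i ≤ i+1+c by omega),
        if_pos (show 2*(i+1+c)+1 ≤ 2*(i+1+c)+1 ∧ i+1 ≤ i+1+c by omega),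
        show 2*(i+1+c)+1+2 - 2*(i+1+c+1) - 1 = 0 by omega,
        show 2*(i+1+c)+1+2 - (i+1+c+1) - 1 = i+c+2 by omega,
        show 2*(i+1+c)+1+2 - (i+1) = i+2*c+4 by omega,
        show (i+1+c+1) - (i+1) = c+1 by omega,
        show 2*(i+1+c)+1 - 2*(i+1+c) - 1 = 0 by omega,
        show 2*(i+1+c)+1 - (i+1+c) - 1 = i+c+1 by omega,
        show 2*(i+1+c)+1 - i = i+2*c+3 by omega,
        show (i+1+c) - i = c+1 by omega,
        show 2*(i+1+c)+1 - (i+1) = i+2*c+2 by omega,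
        show (i+1+c) - (i+1) = c by omega,
        fact_eq (i+c+2) (i+c+1) (by omega),
        fact_eq (i+2*c+4) (i+2*c+3) (by omega), fact_eq (i+2*c+3) (i+2*c+2) (by omega),
        fact_eq (c+1) c (by omega), fact_eq (i+1+1) (i+1) (by omega),
        fact_eq (i+1) i (by omega)]
      try simp only [Nat.factorial_zero]
      have h1 := factq_ne (i+c+1); have h2 := factq_ne (i+2*c+2)
      have h3 := factq_ne c; have h4 := factq_ne i
      have h5 : ((c:ℚ)+1) ≠ 0 := by positivity
      have h6 : ((i:ℚ)+1) ≠ 0 := by positivity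
      push_cast; field_simp; ring
    · obtain ⟨hn, rfl⟩ := h
      obtain ⟨a, rfl⟩ : ∃ a, n = 2*i+2+a := ⟨n - (2*i+2), by omega⟩
      simp only [shQ, gcQ]
      rw [if_pos (show 2*(i+1)+1 ≤ 2*i+2+a+2 ∧ i+1 ≤ i+1 by omega),
        if_pos (show 2*(i+1)+1 ≤ 2*i+2+a+1 ∧ i+1 ≤ i+1 by omega),
        if_pos (show 2*i+1 ≤ 2*i+2+a ∧ i ≤ i by omega),
        if_neg (show ¬(2*i+1 ≤ 2*i+2+a ∧ i+1 ≤ i) by omega),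
        show 2*i+2+a+2 - 2*(i+1) - 1 = a+1 by omega,
        show 2*i+2+a+2 - (i+1) - 1 = i+a+2 by omega,
        show 2*i+2+a+2 - (i+1) = i+a+3 by omega,
        show (i+1)-(i+1) = 0 by omega,
        show 2*i+2+a+1 - 2*(i+1) - 1 = a by omega,
        show 2*i+2+a+1 - (i+1) - 1 = i+a+1 by omega,
        show 2*i+2+a+1 - (i+1) = i+a+2 by omega,
        show 2*i+2+a - 2*i - 1 = a+1 by omega,
        show 2*i+2+a - i - 1 = i+a+1 by omega,
        show 2*i+2+a - i = i+a+2 by omega,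
        show i-i = 0 by omega,
        fact_eq (i+a+3) (i+a+2) (by omega), fact_eq (i+a+2) (i+a+1) (by omega),
        fact_eq (a+1) a (by omega), fact_eq (i+1+1) (i+1) (by omega),
        fact_eq (i+1) i (by omega)]
      try simp only [Nat.factorial_zero]
      have h1 := factq_ne (i+a+1); have h2 := factq_ne a; have h3 := factq_ne i
      have h4 : ((a:ℚ)+1) ≠ 0 := by positivity
      have h5 : ((i:ℚ)+1) ≠ 0 := by positivity
      push_cast; field_simp; ring
    · obtain ⟨hn, hij⟩ := h
      obtain ⟨c, rfl⟩ : ∃ c, j = i+1+c := ⟨j - (i+1), by omega⟩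
      obtain ⟨a, rfl⟩ : ∃ a, n = 2*(i+1+c)+2+a := ⟨n - (2*(i+1+c)+2), by omega⟩
      simp only [shQ, gcQ]
      rw [if_pos (show 2*(i+1+c+1)+1 ≤ 2*(i+1+c)+2+a+2 ∧ i+1 ≤ i+1+c+1 by omega),
        if_pos (show 2*(i+1+c+1)+1 ≤ 2*(i+1+c)+2+a+1 ∧ i+1 ≤ i+1+c+1 by omega),
        if_pos (show 2*(i+1+c)+1 ≤ 2*(i+1+c)+2+a ∧ i ≤ i+1+c by omega),
        if_pos (show 2*(i+1+c)+1 ≤ 2*(i+1+c)+2+a ∧ i+1 ≤ i+1+c by omega),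
        show 2*(i+1+c)+2+a+2 - 2*(i+1+c+1) - 1 = a+1 by omega,
        show 2*(i+1+c)+2+a+2 - (i+1+c+1) - 1 = i+c+a+3 by omega,
        show 2*(i+1+c)+2+a+2 - (i+1) = i+2*c+a+5 by omega,
        show (i+1+c+1) - (i+1) = c+1 by omega,
        show 2*(i+1+c)+2+a+1 - 2*(i+1+c+1) - 1 = a by omega,
        show 2*(i+1+c)+2+a+1 - (i+1+c+1) - 1 = i+c+a+2 by omega,
        show 2*(i+1+c)+2+a+1 - (i+1) = i+2*c+a+4 by omega,
        show 2*(i+1+c)+2+a - 2*(i+1+c) - 1 = a+1 by omega,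
        show 2*(i+1+c)+2+a - (i+1+c) - 1 = i+c+a+2 by omega,
        show 2*(i+1+c)+2+a - i = i+2*c+a+4 by omega,
        show (i+1+c) - i = c+1 by omega,
        show 2*(i+1+c)+2+a - (i+1) = i+2*c+a+3 by omega,
        show (i+1+c) - (i+1) = c by omega,
        fact_eq (i+c+a+3) (i+c+a+2) (by omega),
        fact_eq (i+2*c+a+5) (i+2*c+a+4) (by omega),
        fact_eq (i+2*c+a+4) (i+2*c+a+3) (by omega),
        fact_eq (a+1) a (by omega), fact_eq (c+1) c (by omega),
        fact_eq (i+1+1) (i+1) (by omega), fact_eq (i+1) i (by omega)]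
      try simp only [Nat.factorial_zero]
      have h1 := factq_ne (i+c+a+2); have h2 := factq_ne (i+2*c+a+3)
      have h3 := factq_ne a; have h4 := factq_ne c; have h5 := factq_ne i
      have h6 : ((a:ℚ)+1) ≠ 0 := by positivity
      have h7 : ((c:ℚ)+1) ≠ 0 := by positivity
      have h8 : ((i:ℚ)+1) ≠ 0 := by positivity
      push_cast; field_simp; ring

lemma sum_range_ext (f : ℕ → ℚ) {M N : ℕ} (h : M ≤ N) (h0 : ∀ k, M ≤ k → f k = 0) :
    ∑ k ∈ Finset.range N, f k = ∑ k ∈ Finset.range M, f k :=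
  (Finset.sum_subset (Finset.range_subset_range.mpr h)
    (fun x _ hx => h0 x (by simpa using hx))).symm

lemma shP_sum (K Z B : ℚ) (n M : ℕ) (hM : n/2 < M) :
    ∑ j ∈ Finset.range (M+1), ∑ i ∈ Finset.range (M+1), shP K Z B n j i
      = K * (B - ((n:ℚ)+2)) * (B + ((n:ℚ)+1))
          * ∑ j ∈ Finset.range (M+1), ∑ i ∈ Finset.range (M+1), (gcP K Z n j i * lamB B i) := by
  rw [Finset.sum_range_succ']
  have h0 : ∑ i ∈ Finset.range (M+1), shP K Z B n 0 i = 0 :=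
    Finset.sum_eq_zero (fun i _ => rfl)
  rw [h0, add_zero]
  rw [Finset.mul_sum, Finset.sum_range_succ]
  have htop : K * (B - ((n:ℚ)+2)) * (B + ((n:ℚ)+1))
      * ∑ i ∈ Finset.range (M+1), gcP K Z n M i * lamB B i = 0 := by
    rw [Finset.sum_eq_zero, mul_zero]
    intro i _; rw [gcP_zero _ _ (by omega)]; ring
  rw [htop, add_zero]
  refine Finset.sum_congr rfl fun j hj => ?_
  have hjM : j < M := Finset.mem_range.mp hj
  rw [Finset.sum_range_succ' (fun i => shP K Z B n (j+1) i) M]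
  have hpt : ∀ i ∈ Finset.range (M+1),
      K * (B - ((n:ℚ)+2)) * (B + ((n:ℚ)+1)) * (gcP K Z n j i * lamB B i)
      = K * gcP K Z n j i * lamB B (i+1)
        - K * (((n:ℚ)+1) - (i:ℚ)) * ((n:ℚ) + (i:ℚ) + 2) * (gcP K Z n j i * lamB B i) := by
    intro i _; rw [lamB_succ]; ring
  rw [Finset.mul_sum, Finset.sum_congr rfl hpt, Finset.sum_sub_distrib]
  have hA : ∑ i ∈ Finset.range (M+1), K * gcP K Z n j i * lamB B (i+1)
      = ∑ i ∈ Finset.range M, K * gcP K Z n j i * lamB B (i+1) := by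
    rw [Finset.sum_range_succ, gcP_zero _ _ (by omega), mul_zero, zero_mul, add_zero]
  rw [hA, Finset.sum_range_succ'
    (fun i => K * (((n:ℚ)+1) - (i:ℚ)) * ((n:ℚ) + (i:ℚ) + 2) * (gcP K Z n j i * lamB B i)) M]
  have e1 : ∀ i ∈ Finset.range M, shP K Z B n (j+1) (i+1)
      = K * gcP K Z n j i * lamB B (i+1)
        - K * (((n:ℚ)+1) - (((i:ℚ))+1)) * ((n:ℚ) + ((i:ℚ)+1) + 2)
            * (gcP K Z n j (i+1) * lamB B (i+1)) := by
    intro i _; simp only [shP]; push_cast; ring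
  rw [Finset.sum_congr rfl e1, Finset.sum_sub_distrib]
  simp only [shP]
  push_cast
  ring

lemma shQ_sum (K Z B : ℚ) (n M : ℕ) (hM : (n+1)/2 ≤ M) :
    ∑ j ∈ Finset.range (M+1), ∑ i ∈ Finset.range (M+1), shQ K Z B n j i
      = K * (B - ((n:ℚ)+2)) * (B + ((n:ℚ)+1))
          * ∑ j ∈ Finset.range (M+1), ∑ i ∈ Finset.range (M+1), (gcQ K Z n j i * lamB B i) := by
  rw [Finset.sum_range_succ']
  have h0 : ∑ i ∈ Finset.range (M+1), shQ K Z B n 0 i = 0 :=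
    Finset.sum_eq_zero (fun i _ => rfl)
  rw [h0, add_zero]
  rw [Finset.mul_sum, Finset.sum_range_succ]
  have htop : K * (B - ((n:ℚ)+2)) * (B + ((n:ℚ)+1))
      * ∑ i ∈ Finset.range (M+1), gcQ K Z n M i * lamB B i = 0 := by
    rw [Finset.sum_eq_zero, mul_zero]
    intro i _; rw [gcQ_zero _ _ (by omega)]; ring
  rw [htop, add_zero]
  refine Finset.sum_congr rfl fun j hj => ?_
  have hjM : j < M := Finset.mem_range.mp hj
  rw [Finset.sum_range_succ' (fun i => shQ K Z B n (j+1) i) M]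
  have hpt : ∀ i ∈ Finset.range (M+1),
      K * (B - ((n:ℚ)+2)) * (B + ((n:ℚ)+1)) * (gcQ K Z n j i * lamB B i)
      = K * gcQ K Z n j i * lamB B (i+1)
        - K * (((n:ℚ)+1) - (i:ℚ)) * ((n:ℚ) + (i:ℚ) + 2) * (gcQ K Z n j i * lamB B i) := by
    intro i _; rw [lamB_succ]; ring
  rw [Finset.mul_sum, Finset.sum_congr rfl hpt, Finset.sum_sub_distrib]
  have hA : ∑ i ∈ Finset.range (M+1), K * gcQ K Z n j i * lamB B (i+1)
      = ∑ i ∈ Finset.range M, K * gcQ K Z n j i * lamB B (i+1) := by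
    rw [Finset.sum_range_succ, gcQ_zero _ _ (by omega), mul_zero, zero_mul, add_zero]
  rw [hA, Finset.sum_range_succ'
    (fun i => K * (((n:ℚ)+1) - (i:ℚ)) * ((n:ℚ) + (i:ℚ) + 2) * (gcQ K Z n j i * lamB B i)) M]
  have e1 : ∀ i ∈ Finset.range M, shQ K Z B n (j+1) (i+1)
      = K * gcQ K Z n j i * lamB B (i+1)
        - K * (((n:ℚ)+1) - (((i:ℚ))+1)) * ((n:ℚ) + ((i:ℚ)+1) + 2)
            * (gcQ K Z n j (i+1) * lamB B (i+1)) := by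
    intro i _; simp only [shQ]; push_cast; ring
  rw [Finset.sum_congr rfl e1, Finset.sum_sub_distrib]
  simp only [shQ]
  push_cast
  ring

def SP (K Z B : ℚ) (n : ℕ) : ℚ :=
  ∑ j ∈ Finset.range (n / 2 + 1),
    (-1 : ℚ) ^ j * K ^ (n - j) * (Z / K) ^ (n - 2 * j) *
      (((n - j).factorial : ℚ) / ((n - 2 * j).factorial : ℚ)) *
      ∑ i ∈ Finset.range (j + 1),
        (-1 : ℚ) ^ i * ((n - i).factorial : ℚ) /
            ((i.factorial : ℚ) ^ 2 * ((j - i).factorial : ℚ)) *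
          ∏ t ∈ Finset.range (2 * i), (B + (t : ℚ) - (i : ℚ))

def SQ (K Z B : ℚ) (n : ℕ) : ℚ :=
  (B - 1) *
    ∑ j ∈ Finset.range ((n + 1) / 2),
      (-1 : ℚ) ^ j * K ^ (n - j) * (Z / K) ^ (n - 2 * j - 1) *
        (((n - j - 1).factorial : ℚ) / ((n - 2 * j - 1).factorial : ℚ)) *
        ∑ i ∈ Finset.range (j + 1),
          (-1 : ℚ) ^ i * ((n - i).factorial : ℚ) /
              ((i.factorial : ℚ) * ((i + 1).factorial : ℚ) * ((j - i).factorial : ℚ)) *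
            ∏ t ∈ Finset.range (2 * i), (B + (t : ℚ) - (i : ℚ))

lemma SP_eq (K Z B : ℚ) (hK : K ≠ 0) (n N : ℕ) (hN : n/2 + 1 ≤ N) :
    SP K Z B n = ∑ j ∈ Finset.range N, ∑ i ∈ Finset.range N, gcP K Z n j i * lamB B i := by
  simp only [SP]
  rw [sum_range_ext (fun j => ∑ i ∈ Finset.range N, gcP K Z n j i * lamB B i) hN
    (fun k hk => Finset.sum_eq_zero (fun i _ => by rw [gcP_zero _ _ (by omega), zero_mul]))]
  refine Finset.sum_congr rfl fun j hj => ?_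
  have hj' : j ≤ n/2 := by have := Finset.mem_range.mp hj; omega
  rw [sum_range_ext (fun i => gcP K Z n j i * lamB B i) (show j+1 ≤ N by omega)
    (fun k hk => by show gcP K Z n j k * lamB B k = 0; rw [gcP_zero _ _ (by omega), zero_mul])]
  rw [Finset.mul_sum]
  refine Finset.sum_congr rfl fun i hi => ?_
  have hij : i ≤ j := by have := Finset.mem_range.mp hi; omega
  simp only [gcP, lamB, if_pos (show 2*j ≤ n ∧ i ≤ j by omega)]
  rw [show n - j = (n - 2*j) + j by omega, pow_add, div_pow]
  have h1 := factq_ne (n - 2*j)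
  have h2 := factq_ne i
  have h3 := factq_ne (j - i)
  have hKp : K ^ (n - 2*j) ≠ 0 := pow_ne_zero _ hK
  field_simp
  ring

lemma SQ_eq (K Z B : ℚ) (hK : K ≠ 0) (n N : ℕ) (hN : (n+1)/2 ≤ N) :
    SQ K Z B n
      = (B - 1) * ∑ j ∈ Finset.range N, ∑ i ∈ Finset.range N, gcQ K Z n j i * lamB B i := by
  simp only [SQ]
  congr 1
  rw [sum_range_ext (fun j => ∑ i ∈ Finset.range N, gcQ K Z n j i * lamB B i) hN
    (fun k hk => Finset.sum_eq_zero (fun i _ => by rw [gcQ_zero _ _ (by omega), zero_mul]))]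
  refine Finset.sum_congr rfl fun j hj => ?_
  have hj' : j < (n+1)/2 := Finset.mem_range.mp hj
  rw [sum_range_ext (fun i => gcQ K Z n j i * lamB B i) (show j+1 ≤ N by omega)
    (fun k hk => by show gcQ K Z n j k * lamB B k = 0; rw [gcQ_zero _ _ (by omega), zero_mul])]
  rw [Finset.mul_sum]
  refine Finset.sum_congr rfl fun i hi => ?_
  have hij : i ≤ j := by have := Finset.mem_range.mp hi; omega
  simp only [gcQ, lamB, if_pos (show 2*j+1 ≤ n ∧ i ≤ j by omega)]
  rw [show n - j = (n - 2*j - 1) + (j+1) by omega, pow_add, div_pow]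
  have h1 := factq_ne (n - 2*j - 1)
  have h2 := factq_ne i
  have h3 := factq_ne (i+1)
  have h4 := factq_ne (j - i)
  have hKp : K ^ (n - 2*j - 1) ≠ 0 := pow_ne_zero _ hK
  field_simp
  ring

lemma recP (K Z B : ℚ) (hK : K ≠ 0) (n : ℕ) :
    SP K Z B (n+2)
      = Z * ((n:ℚ)+2) * SP K Z B (n+1)
        + K * (B - ((n:ℚ)+2)) * (B + ((n:ℚ)+1)) * SP K Z B n := by
  rw [SP_eq K Z B hK (n+2) ((n/2+1)+1) (by omega),
    SP_eq K Z B hK (n+1) ((n/2+1)+1) (by omega),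
    SP_eq K Z B hK n ((n/2+1)+1) (by omega),
    ← shP_sum K Z B n (n/2+1) (by omega)]
  rw [Finset.mul_sum, ← Finset.sum_add_distrib]
  refine Finset.sum_congr rfl fun j _ => ?_
  rw [Finset.mul_sum, ← Finset.sum_add_distrib]
  exact Finset.sum_congr rfl fun i _ => keyP K Z B n j i

lemma recQ (K Z B : ℚ) (hK : K ≠ 0) (n : ℕ) :
    SQ K Z B (n+2)
      = Z * ((n:ℚ)+2) * SQ K Z B (n+1)
        + K * (B - ((n:ℚ)+2)) * (B + ((n:ℚ)+1)) * SQ K Z B n := by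
  have hrec : (∑ j ∈ Finset.range ((n/2+1)+1), ∑ i ∈ Finset.range ((n/2+1)+1),
        gcQ K Z (n+2) j i * lamB B i)
      = Z * ((n:ℚ)+2) * ∑ j ∈ Finset.range ((n/2+1)+1), ∑ i ∈ Finset.range ((n/2+1)+1),
            (gcQ K Z (n+1) j i * lamB B i)
        + K * (B - ((n:ℚ)+2)) * (B + ((n:ℚ)+1))
            * ∑ j ∈ Finset.range ((n/2+1)+1), ∑ i ∈ Finset.range ((n/2+1)+1),
                (gcQ K Z n j i * lamB B i) := by
    rw [← shQ_sum K Z B n (n/2+1) (by omega)]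
    rw [Finset.mul_sum, ← Finset.sum_add_distrib]
    refine Finset.sum_congr rfl fun j _ => ?_
    rw [Finset.mul_sum, ← Finset.sum_add_distrib]
    exact Finset.sum_congr rfl fun i _ => keyQ K Z B n j i
  rw [SQ_eq K Z B hK (n+2) ((n/2+1)+1) (by omega),
    SQ_eq K Z B hK (n+1) ((n/2+1)+1) (by omega),
    SQ_eq K Z B hK n ((n/2+1)+1) (by omega)]
  linear_combination (B-1) * hrec

noncomputable def RB (B : ℚ) (n : ℕ) : ℚ := (ascPochhammer ℚ n).eval (B + 1)

lemma RB_zero (B : ℚ) : RB B 0 = 1 := by simp [RB]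

lemma RB_succ (B : ℚ) (n : ℕ) : RB B (n+1) = RB B n * (B + 1 + (n:ℚ)) := by
  simp [RB, ascPochhammer_succ_right]

lemma RB_pos (B : ℚ) (hB : 0 < B) (n : ℕ) : 0 < RB B n := by
  induction n with
  | zero => rw [RB_zero]; norm_num
  | succ n ih =>
    rw [RB_succ]
    have : (0:ℚ) ≤ (n:ℚ) := Nat.cast_nonneg n
    have : (0:ℚ) < B + 1 + (n:ℚ) := by linarith
    positivity

lemma SP_zero (K Z B : ℚ) : SP K Z B 0 = 1 := by
  simp [SP]

lemma SP_one (K Z B : ℚ) (hK : K ≠ 0) : SP K Z B 1 = Z := by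
  simp [SP]
  field_simp

lemma SQ_zero (K Z B : ℚ) : SQ K Z B 0 = 0 := by
  simp [SQ]

lemma SQ_one (K Z B : ℚ) : SQ K Z B 1 = (B - 1) * K := by
  simp [SQ]

lemma mainlem (K Z B : ℚ) (hK : K ≠ 0) (hB : 0 < B) (v : ℕ → ℚ)
    (hv : ∀ n : ℕ,
      ((n : ℚ) + 1 + B) * v (n + 2) = Z * ((n : ℚ) + 1) * v (n + 1) + K * (B - ((n : ℚ) + 1)) * v n) :
    ∀ n : ℕ, v (n+1) = SP K Z B n / RB B n * v 1 + SQ K Z B n / RB B n * v 0 := by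
  have key : ∀ n : ℕ,
      (v (n+1) = SP K Z B n / RB B n * v 1 + SQ K Z B n / RB B n * v 0)
      ∧ (v (n+2) = SP K Z B (n+1) / RB B (n+1) * v 1 + SQ K Z B (n+1) / RB B (n+1) * v 0) := by
    intro n
    induction n with
    | zero =>
      constructor
      · rw [SP_zero, SQ_zero, RB_zero]; norm_num
      · have h0 := hv 0
        rw [SP_one K Z B hK, SQ_one, RB_succ, RB_zero]
        have hne : B + 1 + ((0:ℕ):ℚ) ≠ 0 := by
          have : (0:ℚ) < B + 1 + ((0:ℕ):ℚ) := by push_cast; linarith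
          exact this.ne'
        field_simp
        push_cast at h0 ⊢
        linear_combination h0
    | succ n ih =>
      obtain ⟨ih1, ih2⟩ := ih
      refine ⟨ih2, ?_⟩
      have hv' := hv (n+1)
      push_cast at hv'
      have hp := recP K Z B hK n
      have hq := recQ K Z B hK n
      have hs1 := RB_succ B n
      have hs2 := RB_succ B (n+1)
      have hRn : RB B n ≠ 0 := (RB_pos B hB n).ne'
      have hc0 : (0:ℚ) ≤ (n:ℚ) := Nat.cast_nonneg n
      have hne1 : B + 1 + (n:ℚ) ≠ 0 := by positivity
      have hne2 : B + 1 + ((n:ℚ)+1) ≠ 0 := by positivity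
      have hne3 : (n:ℚ) + 1 + 1 + B ≠ 0 := by positivity
      rw [show n+1+2 = n+2+1 by omega] at hv'
      rw [show n+1+1 = n+2 from rfl] at ih2 ⊢
      rw [show (n:ℚ)+1+1 = (n:ℚ)+2 by ring] at hv' hne3
      -- express v (n+2+1)
      have hveq : v (n+2+1)
          = (Z * ((n:ℚ)+2) * v (n+2) + K * (B - ((n:ℚ)+2)) * v (n+1)) / ((n:ℚ)+2+B) := by
        rw [eq_div_iff (by linarith [hB] : ((n:ℚ)+2+B) ≠ 0)]
        linear_combination hv'
      rw [hveq, ih1, ih2, hp, hq, hs2, hs1]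
      push_cast
      have hne2' : B + 1 + ((n:ℚ)+1) ≠ 0 := hne2
      field_simp
      ring
  intro n
  exact (key n).1

theorem stmt7 (D : ℕ) (hD : 2 ≤ D) (A K Z B : ℚ) (hK : K ≠ 0)
    (hZ : Z = A / D) (hB : B = 1 / D) (v : ℕ → ℚ)
    (hv : ∀ n : ℕ,
      ((n : ℚ) + 1 + B) * v (n + 2) = Z * ((n : ℚ) + 1) * v (n + 1) + K * (B - ((n : ℚ) + 1)) * v n) :
    ∀ n : ℕ,
      v (n + 1) =
        (∑ j ∈ Finset.range (n / 2 + 1),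
            (-1 : ℚ) ^ j * K ^ (n - j) * (Z / K) ^ (n - 2 * j) *
              (((n - j).factorial : ℚ) / ((n - 2 * j).factorial : ℚ)) *
              ∑ i ∈ Finset.range (j + 1),
                (-1 : ℚ) ^ i * ((n - i).factorial : ℚ) /
                    ((i.factorial : ℚ) ^ 2 * ((j - i).factorial : ℚ)) *
                  ∏ t ∈ Finset.range (2 * i), (B + (t : ℚ) - (i : ℚ))) /
          (ascPochhammer ℚ n).eval (B + 1) * v 1 +
        ((B - 1) *
            ∑ j ∈ Finset.range ((n + 1) / 2),
              (-1 : ℚ) ^ j * K ^ (n - j) * (Z / K) ^ (n - 2 * j - 1) *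
                (((n - j - 1).factorial : ℚ) / ((n - 2 * j - 1).factorial : ℚ)) *
                ∑ i ∈ Finset.range (j + 1),
                  (-1 : ℚ) ^ i * ((n - i).factorial : ℚ) /
                      ((i.factorial : ℚ) * ((i + 1).factorial : ℚ) * ((j - i).factorial : ℚ)) *
                    ∏ t ∈ Finset.range (2 * i), (B + (t : ℚ) - (i : ℚ))) /
          (ascPochhammer ℚ n).eval (B + 1) * v 0 := by
  have hBpos : 0 < B := by
    rw [hB]
    have hD' : (0:ℚ) < (D:ℚ) := by exact_mod_cast (by omega : 0 < D)
    positivity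
  intro n
  exact mainlem K Z B hK hBpos v hv n
end

section
/- Fix D ∈ {3,4,6}, nonnegative integers i ≤ n, and a prime p with p ≡ −1 (mod D), √(2Dn) < p ≤ n. Let k be an integer with i ≤ k ≤ n and p ∣ Dk+1. If neither C(k+i,i) nor C(n−i,k−i) is divisible by p, then either {(n+1−1/D)/p} < 1/D or {(n+1/D)/p} ≥ 1 − 1/D. -/
/-!
Write `p + 1 = D t`. Since `D (p - t) + 1 = (D - 1) p`, the condition `p ∣ D k + 1` forces the
last base-`p` digit of `k` to be `p - t`. By Lucas' theorem, `p ∤ C(k + i, i)` and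
`p ∤ C(n - i, k - i)` imply that no carry occurs in the last digit when adding `i` to `k`, resp.
`k - i` to `n - k`. Hence the last digit `r` of `n` satisfies `r ≥ p - t` or `r < i mod p < t`,
and as `{(n + x) / p} = (r + x) / p` for `0 ≤ x < 1`, these two cases give the two alternatives.
-/

theorem Nat.mod_add_mod_lt_of_not_dvd_choose {p a b : ℕ} (hp : p.Prime)
    (h : ¬ p ∣ (a + b).choose a) : a % p + b % p < p := by
  have := Fact.mk hp
  by_contra! hcarry
  have hlt : (a + b) % p < a % p := by
    have := Nat.add_mod_add_of_le_add_mod hcarry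
    have := b.mod_lt hp.pos
    omega
  apply h
  rw [← Nat.modEq_zero_iff_dvd]
  simpa [Nat.choose_eq_zero_of_lt hlt] using
    Choose.choose_modEq_choose_mod_mul_choose_div_nat (n := a + b) (k := a) (p := p)

theorem Nat.mod_add_eq_of_dvd_mul_add_one {D t p k : ℕ} (hD : 1 < D) (hpt : D * t = p + 1)
    (hk : p ∣ D * k + 1) : k % p + t = p := by
  have hcop : p.Coprime D := Nat.Coprime.coprime_dvd_right ⟨t, hpt.symm⟩
    (Nat.coprime_self_add_right.mpr (Nat.coprime_one_right p))
  have hdvd : p ∣ k % p + t := by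
    have : p ∣ D * (k + t) := by
      rw [mul_add, hpt, ← add_assoc, add_right_comm]
      exact dvd_add hk dvd_rfl
    have := hcop.dvd_of_dvd_mul_left this
    rwa [← Nat.mod_add_div k p, add_right_comm, Nat.dvd_add_left (dvd_mul_right p _)] at this
  have ht : 0 < t := Nat.pos_of_ne_zero (by rintro rfl; simp at hpt)
  have hp : 0 < p := Nat.pos_of_ne_zero (by rintro rfl; omega)
  have : 2 * t ≤ p + 1 := hpt ▸ Nat.mul_le_mul_right t hD
  exact Nat.eq_of_dvd_of_lt_two_mul (by omega) hdvd (by have := k.mod_lt hp; omega)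

theorem Nat.add_mod_le_or_lt_mod_of_add_mod_lt {p i j m : ℕ} (h : j % p + m % p < p) :
    (i + j) % p ≤ (i + j + m) % p ∨ (i + j + m) % p < i % p := by
  have hij := Nat.add_mod_add_ite i j p
  rcases lt_or_ge ((i + j) % p + m % p) p with hc | hc
  · left
    simp [Nat.add_mod_of_add_mod_lt hc]
  · right
    have := Nat.add_mod_add_of_le_add_mod hc
    split_ifs at hij <;> omega

section FloorField

variable {k : Type*} [Field k] [LinearOrder k] [IsStrictOrderedRing k] [FloorRing k]

theorem Int.fract_natCast_add_div_natCast {n p : ℕ} {x : k} (hp : 0 < p) (hx₀ : 0 ≤ x)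
    (hx₁ : x < 1) : Int.fract ((n + x) / p) = (↑(n % p) + x) / p := by
  have hp' : (0 : k) < p := by exact_mod_cast hp
  have hr : ((n % p : ℕ) : k) + 1 ≤ p := by exact_mod_cast n.mod_lt hp
  refine Int.fract_eq_iff.mpr
    ⟨by positivity, (div_lt_one hp').mpr (by linarith), ((n / p : ℕ) : ℤ), ?_⟩
  have hn : (n : k) = p * ↑(n / p) + ↑(n % p) := by exact_mod_cast (Nat.div_add_mod n p).symm
  rw [hn, Int.cast_natCast]
  field_simp
  ring

theorem Int.fract_natCast_add_one_sub_inv_div_lt {D t p n : ℕ} (hp : 0 < p)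
    (hpt : D * t = p + 1) (hn : n % p + 2 ≤ t) :
    Int.fract (((n : k) + 1 - 1 / D) / p) < 1 / D := by
  have hD : (1 : k) ≤ D := by exact_mod_cast Nat.pos_of_ne_zero (by rintro rfl; omega)
  have hp' : (0 : k) < p := by exact_mod_cast hp
  have key : ((D * (n % p + 2) : ℕ) : k) ≤ p + 1 := by
    exact_mod_cast hpt ▸ Nat.mul_le_mul_left D hn
  have hD₀ : (0 : k) < D := by linarith
  have hinv : 1 / (D : k) ≤ 1 := (div_le_one hD₀).mpr hD
  rw [add_sub_assoc,
    Int.fract_natCast_add_div_natCast hp (by linarith) (sub_lt_self 1 (by positivity)),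
    div_lt_div_iff₀ hp' (by positivity)]
  push_cast at key
  field_simp
  linarith

theorem Int.one_sub_inv_le_fract_natCast_add_inv_div {D t p n : ℕ} (hD : 1 < D) (hp : 0 < p)
    (hpt : D * t = p + 1) (hn : p ≤ n % p + t) :
    1 - 1 / D ≤ Int.fract (((n : k) + 1 / D) / p) := by
  have hD' : (1 : k) < D := by exact_mod_cast hD
  have hp' : (0 : k) < p := by exact_mod_cast hp
  have key : ((D * p : ℕ) : k) ≤ D * (n % p : ℕ) + p + 1 := by
    exact_mod_cast (show D * p ≤ D * (n % p) + p + 1 by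
      rw [add_assoc, ← hpt, ← mul_add]; exact Nat.mul_le_mul_left D hn)
  rw [Int.fract_natCast_add_div_natCast hp (by positivity) ((div_lt_one (by positivity)).mpr hD'),
    le_div_iff₀ hp']
  push_cast at key
  field_simp
  linarith

end FloorField

theorem stmt12_general (D i n k p : ℕ) (hD : D = 3 ∨ D = 4 ∨ D = 6)
    (hp : p.Prime) (hmod : (p : ZMod D) = -1)
    (hik : i ≤ k) (hkn : k ≤ n) (hdvd : p ∣ D * k + 1)
    (h1 : ¬ p ∣ (k + i).choose i) (h2 : ¬ p ∣ (n - i).choose (k - i)) :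
    Int.fract (((n : ℝ) + 1 - 1 / D) / p) < 1 / D ∨
      1 - 1 / D ≤ Int.fract (((n : ℝ) + 1 / D) / p) := by
  obtain ⟨t, ht⟩ : D ∣ p + 1 :=
    (ZMod.natCast_eq_zero_iff _ _).mp (by push_cast [hmod]; ring)
  have hkt : k % p + t = p := Nat.mod_add_eq_of_dvd_mul_add_one (by omega) ht.symm hdvd
  have hik' : i % p + k % p < p :=
    Nat.mod_add_mod_lt_of_not_dvd_choose hp (by rwa [add_comm] at h1)
  have hkn' : (k - i) % p + (n - k) % p < p :=
    Nat.mod_add_mod_lt_of_not_dvd_choose hp (by rwa [show k - i + (n - k) = n - i by omega])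
  have hdigit := Nat.add_mod_le_or_lt_mod_of_add_mod_lt (i := i) hkn'
  rw [Nat.add_sub_cancel' hik, Nat.add_sub_cancel' hkn] at hdigit
  rcases hdigit with hge | hlt
  · exact Or.inr <|
      Int.one_sub_inv_le_fract_natCast_add_inv_div (by omega) hp.pos ht.symm (by omega)
  · exact Or.inl (Int.fract_natCast_add_one_sub_inv_div_lt hp.pos ht.symm (by omega))

theorem stmt12 (D i n k p : ℕ) (hD : D = 3 ∨ D = 4 ∨ D = 6) (hin : i ≤ n)
    (hp : p.Prime) (hmod : (p : ZMod D) = -1)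
    (hlow : Real.sqrt (2 * D * n) < p) (hup : p ≤ n)
    (hik : i ≤ k) (hkn : k ≤ n) (hdvd : p ∣ D * k + 1)
    (h1 : ¬ p ∣ (k + i).choose i) (h2 : ¬ p ∣ (n - i).choose (k - i)) :
    Int.fract (((n : ℝ) + 1 - 1 / D) / p) < 1 / D ∨
      1 - 1 / D ≤ Int.fract (((n : ℝ) + 1 / D) / p) :=
  stmt12_general D i n k p hD hp hmod hik hkn hdvd h1 h2
end

section
/- Fix D ∈ {3,4,6}, nonnegative integers i ≤ n, and a prime p with p ≡ −1 (mod D), √(2Dn) < p ≤ n, p ≠ D−1, and p ∤ n+1. Let k be an integer with i ≤ k ≤ n and p ∣ Dk+1. If neither C(k+i,i+1) nor C(n−i,k−i) is divisible by p, then either {(n+1−1/D)/p} < 1/D or {(n+1/D)/p} ≥ 1 − 1/D. -/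
/-!
Since `D ∣ p + 1`, the number `s := (p + 1) / D` is an inverse of `D` modulo `p`, so `k ≡ -s`.
By Lucas's theorem, `¬ p ∣ C(m, j)` forces `j % p ≤ m % p`; applied to the two binomial
coefficients, and with `k - i`, `n - i` recovered from `k`, `n` by adding `i` (with or without a
carry), a case analysis on the last digits shows `n % p + 2 ≤ s` or `p - s ≤ n % p`. With
`ρ = n % p` we have `{(n + c) / p} = (ρ + c) / p` for `0 ≤ c` and `ρ + c < p`, and `p / D = s - 1 / D`,
which turns these two alternatives into the two fractional-part inequalities.
-/

theorem Nat.mod_le_mod_of_not_dvd_choose {p m j : ℕ} (hp : p.Prime) (h : ¬ p ∣ m.choose j) :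
    j % p ≤ m % p := by
  have := Fact.mk hp
  by_contra! hlt
  have hmod := Choose.choose_modEq_choose_mod_mul_choose_div_nat (n := m) (k := j) (p := p)
  rw [Nat.choose_eq_zero_of_lt hlt, zero_mul] at hmod
  exact h (Nat.modEq_zero_iff_dvd.mp hmod)

theorem Nat.add_mod_eq_or (a b p : ℕ) :
    (a + b) % p = a % p + b % p ∨ (a + b) % p + p = a % p + b % p := by
  rcases lt_or_ge (a % p + b % p) p with h | h
  · exact .inl (Nat.add_mod_of_add_mod_lt h)
  · exact .inr (Nat.add_mod_add_of_le_add_mod h)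

theorem Nat.dvd_add_of_mul_eq_add_one {p D s k : ℕ} (hDs : D * s = p + 1)
    (h : p ∣ D * k + 1) : p ∣ k + s := by
  have hs : s * (D * k + 1) = p * k + (k + s) := by linear_combination k * hDs
  exact (Nat.dvd_add_right (dvd_mul_right p k)).mp (hs ▸ h.mul_left s)

theorem mod_add_two_le_or_sub_le_mod {p s i k n : ℕ} (hs : 2 ≤ s) (hsp : 2 * s ≤ p + 1)
    (hks : p ∣ k + s) (hik : i ≤ k) (hin : i ≤ n)
    (h1 : (i + 1) % p ≤ (k + i) % p) (h2 : (k - i) % p ≤ (n - i) % p) :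
    n % p + 2 ≤ s ∨ p - s ≤ n % p := by
  have hp : 0 < p := by omega
  have hks' := Nat.add_mod_eq_or k s p
  have hki := Nat.add_mod_eq_or k i p
  have hi1 := Nat.add_mod_eq_or i 1 p
  have hk := Nat.add_mod_eq_or (k - i) i p
  have hn := Nat.add_mod_eq_or (n - i) i p
  rw [Nat.sub_add_cancel hik] at hk
  rw [Nat.sub_add_cancel hin] at hn
  rw [Nat.mod_eq_zero_of_dvd hks, Nat.mod_eq_of_lt (show s < p by omega)] at hks'
  rw [Nat.mod_eq_of_lt (show 1 < p by omega)] at hi1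
  have := Nat.mod_lt (n - i) hp
  have := Nat.mod_lt (k + i) hp
  omega

theorem Int.fract_natCast_add_div_natCast_s13 {n p : ℕ} {c : ℝ} (hc : 0 ≤ c)
    (hlt : ((n % p : ℕ) : ℝ) + c < p) :
    Int.fract ((n + c) / p) = ((n % p : ℕ) + c) / p := by
  have hp : (0 : ℝ) < p := (add_nonneg (Nat.cast_nonneg _) hc).trans_lt hlt
  have hn : (n : ℝ) = p * (n / p : ℕ) + (n % p : ℕ) := by
    exact_mod_cast (Nat.div_add_mod n p).symm
  rw [hn, add_assoc, add_div, mul_div_cancel_left₀ _ hp.ne', Int.fract_natCast_add,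
    Int.fract_eq_self]
  exact ⟨by positivity, (div_lt_one hp).mpr hlt⟩

theorem fract_add_one_sub_inv_div_lt_inv {D p s n : ℕ} (hDs : D * s = p + 1)
    (h : n % p + 2 ≤ s) : Int.fract (((n : ℝ) + 1 - 1 / D) / p) < 1 / D := by
  have hD : (1 : ℝ) ≤ D := by exact_mod_cast Nat.pos_of_ne_zero (by rintro rfl; omega)
  have hp : (0 : ℝ) < p := by
    exact_mod_cast Nat.pos_of_ne_zero (by rintro rfl; simp only [zero_add, mul_eq_one] at hDs; omega)
  have hDs' : (D : ℝ) * s = p + 1 := by exact_mod_cast hDs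
  have hρ : ((n % p : ℕ) : ℝ) + 2 ≤ s := by exact_mod_cast h
  have hinv : 0 < 1 / (D : ℝ) ∧ 1 / (D : ℝ) ≤ 1 :=
    ⟨by positivity, div_le_one_of_le₀ hD (by positivity)⟩
  have hps : 1 / (D : ℝ) * p = s - 1 / D := by field_simp; linarith
  rw [add_sub_assoc, Int.fract_natCast_add_div_natCast_s13 (by linarith) (by nlinarith),
    div_lt_iff₀ hp, hps]
  linarith

theorem sub_inv_le_fract_add_inv_div {D p s n : ℕ} (hD : 2 ≤ D) (hDs : D * s = p + 1)
    (h : p - s ≤ n % p) : 1 - 1 / D ≤ Int.fract (((n : ℝ) + 1 / D) / p) := by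
  have hp : 0 < p :=
    Nat.pos_of_ne_zero (by rintro rfl; simp only [zero_add, mul_eq_one] at hDs; omega)
  have hsp : s ≤ p := by nlinarith
  have hρ : (p : ℝ) - s ≤ (n % p : ℕ) := by
    rw [← Nat.cast_sub hsp]; exact_mod_cast h
  have hρp : ((n % p : ℕ) : ℝ) + 1 ≤ p := by exact_mod_cast Nat.mod_lt n hp
  have hD' : (2 : ℝ) ≤ D := by exact_mod_cast hD
  have hDs' : (D : ℝ) * s = p + 1 := by exact_mod_cast hDs
  have hinv : 1 / (D : ℝ) < 1 := (div_lt_one (by positivity)).mpr (by linarith)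
  have hps : (1 - 1 / (D : ℝ)) * p = p - s + 1 / D := by field_simp; linarith
  rw [Int.fract_natCast_add_div_natCast_s13 (by positivity) (by linarith),
    le_div_iff₀ (by exact_mod_cast hp), hps]
  linarith

theorem stmt13_general (D i n k p : ℕ) (hD : D = 3 ∨ D = 4 ∨ D = 6) (hin : i ≤ n)
    (hp : p.Prime) (hmod : (p : ZMod D) = -1)
    (hpD : p ≠ D - 1)
    (hik : i ≤ k) (hdvd : p ∣ D * k + 1)
    (h1 : ¬ p ∣ (k + i).choose (i + 1)) (h2 : ¬ p ∣ (n - i).choose (k - i)) :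
    Int.fract (((n : ℝ) + 1 - 1 / D) / p) < 1 / D ∨
      1 - 1 / D ≤ Int.fract (((n : ℝ) + 1 / D) / p) := by
  have hD2 : 2 ≤ D := by omega
  obtain ⟨s, hDs⟩ : D ∣ p + 1 :=
    (ZMod.natCast_eq_zero_iff _ _).mp (by push_cast; rw [hmod]; ring)
  have hs : 2 ≤ s := by
    by_contra! hs
    interval_cases s <;> omega
  have hsp : 2 * s ≤ p + 1 := hDs ▸ Nat.mul_le_mul_right s hD2
  rcases mod_add_two_le_or_sub_le_mod hs hsp (Nat.dvd_add_of_mul_eq_add_one hDs.symm hdvd)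
    hik hin (Nat.mod_le_mod_of_not_dvd_choose hp h1) (Nat.mod_le_mod_of_not_dvd_choose hp h2)
    with h | h
  · exact .inl (fract_add_one_sub_inv_div_lt_inv hDs.symm h)
  · exact .inr (sub_inv_le_fract_add_inv_div hD2 hDs.symm h)

theorem stmt13 (D i n k p : ℕ) (hD : D = 3 ∨ D = 4 ∨ D = 6) (hin : i ≤ n)
    (hp : p.Prime) (hmod : (p : ZMod D) = -1)
    (hlow : Real.sqrt (2 * D * n) < p) (hup : p ≤ n)
    (hpD : p ≠ D - 1) (hpn : ¬ p ∣ n + 1)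
    (hik : i ≤ k) (hkn : k ≤ n) (hdvd : p ∣ D * k + 1)
    (h1 : ¬ p ∣ (k + i).choose (i + 1)) (h2 : ¬ p ∣ (n - i).choose (k - i)) :
    Int.fract (((n : ℝ) + 1 - 1 / D) / p) < 1 / D ∨
      1 - 1 / D ≤ Int.fract (((n : ℝ) + 1 / D) / p) :=
  stmt13_general D i n k p hD hin hp hmod hpD hik hdvd h1 h2
end
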